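/- arXiv:0710.2767 — 4 statements merged into one kernel-verified Lean document; each statement's English description precedes it below -/
import Mathlib

section
/- With the notation of the context, the number of irreducible polynomials satisfies the Möbius-inversion formula P_m(a,s,h) = (1/m) · Σ_{t | m} μ(m/t) · N_t(a,s,h), where μ is the Möbius function and the sum runs over the positive divisors t of m. -/
/-! An element `x` of `K = 𝔽_{q^m}` lies in `𝔽_{q^t}` iff the degree of its minimal polynomial
divides `t`. Hence `N_t = ∑_{u ∣ t} M_u`, where `M_u` counts the admissible elements of degree
exactly `u`, and Möbius inversion gives `M_m = ∑_{t ∣ m} μ(m/t) N_t`. An element of degree `m`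
generates `K`, so its trace and norm are, up to sign, the coefficients of `X^{m-1}` and `1` of its
minimal polynomial; and every monic irreducible polynomial of degree `m` has exactly `m` distinct
roots in `K`. Therefore `M_m = m · P_m`. -/

noncomputable section

open Complex Polynomial Classical

/-- `N_t(a,s,h)`: the number of elements `x` of the subfield `F_{q^t}` of `K = F_{q^m}`
with `Tr_{K/F}(x) = a` and `N_{K/F}(x) ∈ g^h·⟨g^s⟩`. -/
def NN (F K : Type*) [Field F] [Fintype F] [Field K] [Fintype K] [Algebra F K]
    (g : F) (s h t : ℕ) (a : F) : ℕ :=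
  Nat.card {x : K // x ^ (Fintype.card F) ^ t = x ∧ Algebra.trace F K x = a ∧
    ∃ k : ℕ, Algebra.norm F x = g ^ (h + s * k)}

/-- `P_m(a,s,h)`: the number of monic irreducible `f = x^m − a x^{m-1} + ⋯ + (−1)^m b`
of degree `m` over `F` with `b ∈ g^h·⟨g^s⟩`. -/
def PP (F : Type*) [Field F] [Fintype F] (g : F) (m s h : ℕ) (a : F) : ℕ :=
  Nat.card {f : Polynomial F // f.Monic ∧ f.natDegree = m ∧ Irreducible f ∧
    f.coeff (m - 1) = -a ∧ ∃ k : ℕ, (-1 : F) ^ m * f.coeff 0 = g ^ (h + s * k)}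

open Module

theorem Nat.card_eq_mul_card_of_card_fiber {α β : Type*} [Finite α] (π : α → β) {n : ℕ}
    (hn : 0 < n) (hfiber : ∀ b, Nat.card {a // π a = b} = n) :
    Nat.card α = n * Nat.card β := by
  have hsurj : Function.Surjective π := fun b => by
    obtain ⟨⟨a, ha⟩⟩ := (Nat.card_pos_iff.1 (hfiber b ▸ hn)).1
    exact ⟨a, ha⟩
  have := Finite.of_surjective π hsurj
  have := Fintype.ofFinite β
  rw [← Nat.card_congr (Equiv.sigmaFiberEquiv π), Nat.card_sigma,
    Finset.sum_congr rfl fun b _ => hfiber b, Finset.sum_const, Finset.card_univ, smul_eq_mul,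
    mul_comm, Nat.card_eq_fintype_card]

section PrimitiveElement

variable {K L : Type*} [Field K] [Field L] [Algebra K L] [FiniteDimensional K L] {x : L}

theorem adjoin_singleton_eq_top_of_natDegree_minpoly_eq_finrank
    (hx : (minpoly K x).natDegree = finrank K L) : Algebra.adjoin K {x} = ⊤ := by
  rw [← IntermediateField.adjoin_toSubalgebra,
    (Field.primitive_element_iff_minpoly_natDegree_eq K x).2 hx, IntermediateField.top_toSubalgebra]

theorem trace_eq_neg_coeff_minpoly_of_natDegree_eq_finrank
    (hx : (minpoly K x).natDegree = finrank K L) :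
    Algebra.trace K L x = -(minpoly K x).coeff (finrank K L - 1) := by
  have := (PowerBasis.ofAdjoinEqTop (IsIntegral.of_finite K x)
    (adjoin_singleton_eq_top_of_natDegree_minpoly_eq_finrank hx)).trace_gen_eq_nextCoeff_minpoly
  rwa [PowerBasis.ofAdjoinEqTop_gen, nextCoeff_of_natDegree_pos (hx ▸ finrank_pos), hx] at this

theorem norm_eq_coeff_zero_minpoly_of_natDegree_eq_finrank
    (hx : (minpoly K x).natDegree = finrank K L) :
    Algebra.norm K x = (-1) ^ finrank K L * (minpoly K x).coeff 0 := by
  have := Algebra.PowerBasis.norm_gen_eq_coeff_zero_minpoly (PowerBasis.ofAdjoinEqTop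
    (IsIntegral.of_finite K x) (adjoin_singleton_eq_top_of_natDegree_minpoly_eq_finrank hx))
  rwa [PowerBasis.ofAdjoinEqTop_gen, PowerBasis.ofAdjoinEqTop_dim, hx] at this

end PrimitiveElement

section FiniteExtension

variable {F K : Type*} [Field F] [Fintype F] [Field K] [Fintype K] [Algebra F K]

theorem pow_card_pow_eq_self_iff_natDegree_minpoly_dvd (x : K) (t : ℕ) :
    x ^ Fintype.card F ^ t = x ↔ (minpoly F x).natDegree ∣ t := by
  rw [(minpoly.irreducible (IsIntegral.of_finite F x)).natDegree_dvd_iff_dvd_X_pow_card_pow_sub_X,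
    minpoly.dvd_iff, Nat.card_eq_fintype_card]
  simp [sub_eq_zero]

theorem card_minpoly_eq {f : F[X]} (hf : f.Monic) (hirr : Irreducible f)
    (hdvd : f.natDegree ∣ finrank F K) :
    Nat.card {x : K // minpoly F x = f} = f.natDegree := by
  have hsplit : Splits (f.map (algebraMap F K)) := by
    have hcard : Nat.card F ^ finrank F K = Fintype.card K := by
      rw [Nat.card_eq_fintype_card, card_eq_pow_finrank (K := F) (V := K)]
    refine Splits.of_dvd (IsSplittingField.splits K (X ^ Fintype.card K - X : F[X]))
      (map_ne_zero (FiniteField.X_pow_card_sub_X_ne_zero F (Fintype.one_lt_card (α := K))))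
      (Polynomial.map_dvd _ ?_)
    rwa [← hcard, ← hirr.natDegree_dvd_iff_dvd_X_pow_card_pow_sub_X]
  have hroot : ∀ x : K, x ∈ f.rootSet K ↔ minpoly F x = f := fun x => by
    rw [mem_rootSet_of_ne hf.ne_zero]
    exact ⟨fun hx => (minpoly.eq_of_irreducible_of_monic hirr hx hf).symm,
      fun hx => hx ▸ minpoly.aeval F x⟩
  rw [← Nat.card_congr (Equiv.subtypeEquivRight hroot), Nat.card_eq_fintype_card,
    card_rootSet_eq_natDegree (PerfectField.separable_of_irreducible hirr) hsplit]

theorem card_pow_card_pow_eq_self_and (P : K → Prop) {t : ℕ} (ht : t ≠ 0) :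
    Nat.card {x : K // x ^ Fintype.card F ^ t = x ∧ P x} =
      ∑ u ∈ t.divisors, Nat.card {x : K // (minpoly F x).natDegree = u ∧ P x} := by
  simp only [Nat.card_eq_fintype_card, Fintype.card_subtype]
  rw [Finset.card_eq_sum_card_fiberwise (f := fun x => (minpoly F x).natDegree) (t := t.divisors)]
  · refine Finset.sum_congr rfl fun u hu => ?_
    rw [Finset.filter_filter]
    refine congrArg Finset.card (Finset.filter_congr fun x _ => ?_)
    rw [pow_card_pow_eq_self_iff_natDegree_minpoly_dvd]
    constructor
    · rintro ⟨⟨-, hP⟩, hu⟩; exact ⟨hu, hP⟩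
    · rintro ⟨rfl, hP⟩; exact ⟨⟨Nat.dvd_of_mem_divisors hu, hP⟩, rfl⟩
  · intro x hx
    have hdvd := (Finset.mem_filter.1 hx).2.1
    rw [pow_card_pow_eq_self_iff_natDegree_minpoly_dvd] at hdvd
    exact Nat.mem_divisors.2 ⟨hdvd, ht⟩

theorem card_natDegree_minpoly_eq_sum_moebius {R : Type*} [Ring R] (P : K → Prop) {n : ℕ}
    (hn : 0 < n) :
    (Nat.card {x : K // (minpoly F x).natDegree = n ∧ P x} : R) =
      ∑ t ∈ n.divisors, (ArithmeticFunction.moebius (n / t) : R) *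
        Nat.card {x : K // x ^ Fintype.card F ^ t = x ∧ P x} := by
  have hinv := (ArithmeticFunction.sum_eq_iff_sum_mul_moebius_eq (R := R)
    (f := fun u => (Nat.card {x : K // (minpoly F x).natDegree = u ∧ P x} : R))
    (g := fun t => (Nat.card {x : K // x ^ Fintype.card F ^ t = x ∧ P x} : R))).1
    (fun t ht => by rw [card_pow_card_pow_eq_self_and P ht.ne', Nat.cast_sum]) n hn
  rw [← hinv, Nat.sum_divisorsAntidiagonal' (fun i j => (ArithmeticFunction.moebius i : R) *
    Nat.card {x : K // x ^ Fintype.card F ^ j = x ∧ P x})]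

theorem card_natDegree_minpoly_eq_finrank_and (Q : F[X] → Prop) :
    Nat.card {x : K // (minpoly F x).natDegree = finrank F K ∧ Q (minpoly F x)} =
      finrank F K * Nat.card {f : F[X] //
        f.Monic ∧ f.natDegree = finrank F K ∧ Irreducible f ∧ Q f} := by
  refine Nat.card_eq_mul_card_of_card_fiber
    (fun x => ⟨minpoly F x.1, minpoly.monic (IsIntegral.of_finite F x.1), x.2.1,
      minpoly.irreducible (IsIntegral.of_finite F x.1), x.2.2⟩) finrank_pos fun f => ?_
  obtain ⟨f, hmonic, hdeg, hirr, hQ⟩ := f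
  have hfiber : {x : {x : K // (minpoly F x).natDegree = finrank F K ∧ Q (minpoly F x)} //
      minpoly F x.1 = f} ≃ {x : K // minpoly F x = f} :=
    Equiv.subtypeSubtypeEquivSubtype (q := (minpoly F · = f)) fun hx => by
      rw [hx]; exact ⟨hdeg, hQ⟩
  refine (Nat.card_congr ((Equiv.subtypeEquivRight fun x =>
    (Subtype.ext_iff : _ ↔ minpoly F x.1 = f)).trans hfiber)).trans ?_
  exact hdeg ▸ card_minpoly_eq hmonic hirr (hdeg ▸ dvd_rfl)

end FiniteExtension

theorem stmt0_general (m s h : ℕ)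
    (F K : Type*) [Field F] [Fintype F] [Field K] [Fintype K] [Algebra F K]
    (hK : Fintype.card K = Fintype.card F ^ m)
    (g : Fˣ) (a : F) :
    (PP F (g : F) m s h a : ℚ) =
      (1 / m) * ∑ t ∈ m.divisors,
        (ArithmeticFunction.moebius (m / t) : ℚ) * (NN F K (g : F) s h t a : ℚ) := by
  obtain rfl : finrank F K = m :=
    Nat.pow_right_injective Fintype.one_lt_card (hK ▸ card_eq_pow_finrank (K := F) (V := K)).symm
  have hcount : Nat.card {x : K // (minpoly F x).natDegree = finrank F K ∧
      Algebra.trace F K x = a ∧ ∃ k : ℕ, Algebra.norm F x = (g : F) ^ (h + s * k)} =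
      finrank F K * PP F g (finrank F K) s h a := by
    rw [PP, ← card_natDegree_minpoly_eq_finrank_and]
    refine Nat.card_congr (Equiv.subtypeEquivRight fun x => and_congr_right fun hx => ?_)
    rw [trace_eq_neg_coeff_minpoly_of_natDegree_eq_finrank hx,
      norm_eq_coeff_zero_minpoly_of_natDegree_eq_finrank hx, neg_eq_iff_eq_neg]
  have hmoebius := card_natDegree_minpoly_eq_sum_moebius (F := F) (R := ℚ)
    (fun x : K => Algebra.trace F K x = a ∧ ∃ k : ℕ, Algebra.norm F x = (g : F) ^ (h + s * k))
    (finrank_pos (R := F) (M := K))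
  rw [hcount, Nat.cast_mul] at hmoebius
  unfold NN
  rw [← hmoebius, one_div, inv_mul_cancel_left₀ (Nat.cast_ne_zero.2 finrank_pos.ne')]

/-- Möbius inversion formula `P_m(a,s,h) = (1/m)·Σ_{t ∣ m} μ(m/t)·N_t(a,s,h)`. -/
theorem stmt0 (p r m s h : ℕ) [Fact p.Prime] (hr : 0 < r) (hm : 2 ≤ m)
    (F K : Type*) [Field F] [Fintype F] [Field K] [Fintype K] [Algebra F K]
    (hF : Fintype.card F = p ^ r) (hK : Fintype.card K = Fintype.card F ^ m)
    (g : Fˣ) (hg : ∀ u : Fˣ, u ∈ Subgroup.zpowers g)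
    (hs : 0 < s) (hsq : s ∣ Fintype.card F - 1) (hh : h < s) (a : F) :
    (PP F (g : F) m s h a : ℚ) =
      (1 / m) * ∑ t ∈ m.divisors,
        (ArithmeticFunction.moebius (m / t) : ℚ) * (NN F K (g : F) s h t a : ℚ) :=
  stmt0_general m s h F K hK g a

end
end

section
/- With the notation of the context: (i) if d ∤ h then N_t = 0; (ii) if p | (m/t) and a ≠ 0 then N_t = 0; (iii) if p | (m/t), d | h and a = 0 then N_t = (d/s)·(q^t − 1). -/
noncomputable section

open Complex Polynomial Classical

/-!
The elements `x` of `K` with `x ^ q ^ t = x` form the fixed field `L` of the `t`-th power of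
Frobenius, with `[K : L] = m / t`. For `y ∈ L` the tower formulas give
`Tr_{K/F} y = (m/t) • Tr_{L/F} y` and `N_{K/F} y = N_{L/F}(y) ^ (m/t)`, so the trace vanishes
on `L` when `p ∣ m/t`, which is (ii). Writing `N_{L/F} y = g ^ j`, the norm condition becomes
`(m/t) j ≡ h [MOD s]`, which forces `d ∣ h`: this is (i). For (iii), `N_{L/F} : Lˣ → Fˣ` is
surjective, so every fibre has `(q^t - 1)/(q - 1)` elements, and the linear congruence has
`d (q - 1)/s` solutions `j` modulo `q - 1`.
-/

open Finset Module

theorem exists_pow_eq_pow_add_mul_iff {G : Type*} [LeftCancelMonoid G] {x : G}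
    (hx : 0 < orderOf x) {s a b : ℕ} (hs : s ∣ orderOf x) :
    (∃ k, x ^ a = x ^ (b + s * k)) ↔ a ≡ b [MOD s] := by
  simp only [pow_eq_pow_iff_modEq]
  refine ⟨fun ⟨k, hk⟩ ↦ (hk.of_dvd hs).trans (by simp [Nat.ModEq]), fun hab ↦ ?_⟩
  set o := orderOf x
  have hob : b + (o - 1) * b = o * b := by
    have := Nat.le_mul_of_pos_left b hx
    rw [Nat.sub_one_mul]; omega
  -- with `s * k = a + (o - 1) * b` we get `b + s * k = a + o * b ≡ a [MOD o]`
  have hdvd : s ∣ a + (o - 1) * b := by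
    refine Nat.modEq_zero_iff_dvd.mp ?_
    calc a + (o - 1) * b ≡ b + (o - 1) * b [MOD s] := hab.add_right _
      _ = o * b := hob
      _ ≡ 0 [MOD s] := Nat.modEq_zero_iff_dvd.mpr (hs.mul_right b)
  refine ⟨(a + (o - 1) * b) / s, ?_⟩
  rw [Nat.mul_div_cancel' hdvd, ← add_assoc, add_comm b a, add_assoc, hob]
  simp [Nat.ModEq]

theorem Nat.exists_forall_mul_modEq_iff_modEq {c b s : ℕ} (hs : 0 < s) (hb : c.gcd s ∣ b) :
    ∃ v, ∀ j, c * j ≡ b [MOD s] ↔ j ≡ v [MOD s / c.gcd s] := by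
  set d := c.gcd s
  have hd : 0 < d := Nat.gcd_pos_of_pos_right c hs
  have hcop : (c / d).Coprime (s / d) := Nat.coprime_div_gcd_div_gcd hd
  have : NeZero (s / d) := ⟨(Nat.div_pos (Nat.gcd_le_right _ hs) hd).ne'⟩
  let u := ZMod.unitOfCoprime _ hcop
  refine ⟨((u⁻¹ : (ZMod (s / d))ˣ) * (b / d : ℕ) : ZMod (s / d)).val, fun j ↦ ?_⟩
  have hcancel := Nat.ModEq.mul_left_cancel_iff' (a := c / d * j) (b := b / d) (m := s / d) hd.ne'
  rw [← mul_assoc, Nat.mul_div_cancel' (Nat.gcd_dvd_left c s), Nat.mul_div_cancel' hb,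
    Nat.mul_div_cancel' (Nat.gcd_dvd_right c s)] at hcancel
  rw [hcancel, ← ZMod.natCast_eq_natCast_iff, ← ZMod.natCast_eq_natCast_iff, ZMod.natCast_val,
    ZMod.cast_id, Nat.cast_mul, Units.eq_inv_mul_iff_mul_eq]
  rfl

theorem Nat.div_div_eq_mul_div_of_dvd {M s d : ℕ} (hd : d ∣ s) (hsM : s ∣ M) (hs : 0 < s) :
    M / (s / d) = d * (M / s) := by
  obtain ⟨e, rfl⟩ := hd
  obtain ⟨f, rfl⟩ := hsM
  have hd : 0 < d := Nat.pos_of_mul_pos_right hs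
  have he : 0 < e := Nat.pos_of_mul_pos_left hs
  rw [Nat.mul_div_cancel_left _ hd, Nat.mul_div_cancel_left _ hs, mul_comm d e, mul_assoc,
    Nat.mul_div_cancel_left _ he]

theorem Nat.card_filter_range_mul_modEq {M c b s : ℕ} (hs : 0 < s) (hsM : s ∣ M)
    (hb : c.gcd s ∣ b) : #{j ∈ range M | c * j ≡ b [MOD s]} = c.gcd s * (M / s) := by
  obtain ⟨v, hv⟩ := Nat.exists_forall_mul_modEq_iff_modEq hs hb
  have hd : c.gcd s ∣ s := Nat.gcd_dvd_right c s
  have hpos : 0 < s / c.gcd s :=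
    Nat.div_pos (Nat.le_of_dvd hs hd) (Nat.gcd_pos_of_pos_right c hs)
  simp only [hv]
  rw [← Nat.count_eq_card_filter_range, Nat.count_modEq_card M hpos,
    Nat.mod_eq_zero_of_dvd ((Nat.div_dvd_of_dvd hd).trans hsM), if_neg (Nat.not_lt_zero _),
    add_zero, Nat.div_div_eq_mul_div_of_dvd hd hsM hs]

theorem MonoidHom.card_filter_comp_mul_card {A B : Type*} [Group A] [Group B] [Fintype A]
    [Fintype B] (f : A →* B) (hf : Function.Surjective f) (P : B → Prop) [DecidablePred P] :
    #{a | P (f a)} * Fintype.card B = #{b | P b} * Fintype.card A := by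
  have hfiber (b : B) : #{a | f a = b} = #{a | f a = 1} :=
    MonoidHom.card_fiber_eq_of_mem_range f (hf b) (hf 1)
  have hA : Fintype.card A = Fintype.card B * #{a | f a = 1} := by
    rw [← card_univ, card_eq_sum_card_fiberwise (f := f) (t := univ) (fun _ _ ↦ mem_univ _)]
    simp [hfiber]
  have hP : #{a | P (f a)} = #{b | P b} * #{a | f a = 1} := by
    rw [card_eq_sum_card_fiberwise (f := f) (t := {b | P b}) (fun a ha ↦ by simpa using ha)]
    refine sum_const_nat fun b hb ↦ ?_
    rw [filter_filter, ← hfiber b]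
    exact congrArg _ <|
      filter_congr fun a _ ↦ and_iff_right_of_imp fun h ↦ h ▸ (mem_filter.mp hb).2
  rw [hA, hP]; ring

theorem card_filter_eq_card_filter_range_orderOf {G : Type*} [Group G] [Fintype G] {g : G}
    (hg : ∀ x, x ∈ Subgroup.zpowers g) (P : G → Prop) [DecidablePred P] :
    #{x | P x} = #{j ∈ range (orderOf g) | P (g ^ j)} := by
  rw [← IsCyclic.image_range_orderOf hg, filter_image,
    card_image_of_injOn (pow_injOn_Iio_orderOf.mono fun j hj ↦ by simp_all)]

theorem Nat.card_subtype_eq_card_units_subtype {M : Type*} [GroupWithZero M] (P : M → Prop)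
    (hP : ¬ P 0) : Nat.card {x // P x} = Nat.card {u : Mˣ // P u} :=
  Nat.card_congr
    { toFun x := ⟨Units.mk0 x fun h ↦ hP (h ▸ x.2), x.2⟩
      invFun u := ⟨u.1, u.2⟩
      left_inv _ := rfl
      right_inv _ := by ext; rfl }

theorem IntermediateField.mem_fixedField_zpowers_iff {F E : Type*} [Field F] [Field E]
    [Algebra F E] (σ : Gal(E/F)) (x : E) :
    x ∈ fixedField (Subgroup.zpowers σ) ↔ σ x = x := by
  rw [mem_fixedField_iff]
  exact ⟨fun h ↦ h σ (Subgroup.mem_zpowers σ),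
    fun h _ hτ ↦ (Subgroup.zpowers_le (H := MulAction.stabilizer Gal(E/F) x)).mpr h hτ⟩

theorem Algebra.trace_algebraMap_of_tower {F L K : Type*} [Field F] [Field L] [Field K]
    [Algebra F L] [Algebra L K] [Algebra F K] [IsScalarTower F L K] [FiniteDimensional F L]
    [FiniteDimensional L K] (y : L) :
    trace F K (algebraMap L K y) = finrank L K • trace F L y := by
  rw [← trace_trace (S := L), trace_algebraMap, map_nsmul]

theorem Algebra.norm_algebraMap_of_tower {F L K : Type*} [Field F] [Field L] [Field K]
    [Algebra F L] [Algebra L K] [Algebra F K] [IsScalarTower F L K] (y : L) :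
    norm F (algebraMap L K y) = norm F y ^ finrank L K := by
  rw [← norm_norm (S := L), Algebra.norm_algebraMap, map_pow]

namespace FiniteField

variable (F K : Type*) [Field F] [Fintype F] [Field K] [Finite K] [Algebra F K]

def fixedFieldFrobeniusPow (t : ℕ) : IntermediateField F K :=
  IntermediateField.fixedField (Subgroup.zpowers (frobeniusAlgEquivOfAlgebraic F K ^ t))

variable {F K} {t : ℕ}

theorem mem_fixedFieldFrobeniusPow {x : K} :
    x ∈ fixedFieldFrobeniusPow F K t ↔ x ^ Fintype.card F ^ t = x := by
  rw [fixedFieldFrobeniusPow, IntermediateField.mem_fixedField_zpowers_iff, AlgEquiv.coe_pow,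
    coe_frobeniusAlgEquivOfAlgebraic_iterate]

theorem finrank_fixedFieldFrobeniusPow (ht : t ∣ finrank F K) :
    finrank (fixedFieldFrobeniusPow F K t) K = finrank F K / t := by
  have ht0 : t ≠ 0 := by rintro rfl; exact finrank_pos.ne' (zero_dvd_iff.mp ht)
  rw [fixedFieldFrobeniusPow, IntermediateField.finrank_fixedField_eq_card, Nat.card_zpowers,
    orderOf_pow' _ ht0, orderOf_frobeniusAlgEquivOfAlgebraic, Nat.gcd_eq_right ht]

theorem card_fixedFieldFrobeniusPow (ht : t ∣ finrank F K) :
    Nat.card (fixedFieldFrobeniusPow F K t) = Fintype.card F ^ t := by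
  have hn : 0 < finrank F K := finrank_pos
  have htower := finrank_mul_finrank F (fixedFieldFrobeniusPow F K t) K
  rw [finrank_fixedFieldFrobeniusPow ht] at htower
  conv_rhs at htower => rw [← Nat.mul_div_cancel' ht]
  rw [natCard_eq_pow_finrank (K := F), Nat.card_eq_fintype_card,
    Nat.eq_of_mul_eq_mul_right (Nat.div_pos (Nat.le_of_dvd hn ht) (Nat.pos_of_dvd_of_pos ht hn))
      htower]

end FiniteField

section Counting

open FiniteField

variable {F K : Type*} [Field F] [Fintype F] [Field K] [Fintype K] [Algebra F K] {g a : F}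
  {s h t : ℕ}

theorem NN_eq_card_fixedFieldFrobeniusPow (ht : t ∣ finrank F K) :
    NN F K g s h t a = Nat.card {y : fixedFieldFrobeniusPow F K t //
      (finrank F K / t) • Algebra.trace F _ y = a ∧
      ∃ k : ℕ, Algebra.norm F y ^ (finrank F K / t) = g ^ (h + s * k)} := by
  rw [NN, ← finrank_fixedFieldFrobeniusPow ht]
  simp_rw [← mem_fixedFieldFrobeniusPow]
  refine Nat.card_congr ((Equiv.subtypeSubtypeEquivSubtypeInter _ _).symm.trans
    (Equiv.subtypeEquivRight fun y ↦ ?_))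
  rw [← IntermediateField.algebraMap_apply, Algebra.trace_algebraMap_of_tower,
    Algebra.norm_algebraMap_of_tower]

theorem NN_eq_card_units {g : Fˣ} (ht : t ∣ finrank F K) :
    NN F K g s h t a = Nat.card {u : (fixedFieldFrobeniusPow F K t)ˣ //
      (finrank F K / t) • Algebra.trace F _ (u : fixedFieldFrobeniusPow F K t) = a ∧
      ∃ k : ℕ,
        Units.map (Algebra.norm F : _ →* F) u ^ (finrank F K / t) = g ^ (h + s * k)} := by
  have hn : finrank F K / t ≠ 0 := by
    rw [← finrank_fixedFieldFrobeniusPow ht]; exact finrank_pos.ne'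
  rw [NN_eq_card_fixedFieldFrobeniusPow ht, Nat.card_subtype_eq_card_units_subtype]
  · simp_rw [Units.ext_iff, Units.val_pow_eq_pow_val, Units.coe_map]
  · rintro ⟨-, k, hk⟩
    rw [Algebra.norm_zero, zero_pow hn] at hk
    exact pow_ne_zero _ g.ne_zero hk.symm

theorem orderOf_eq_card_sub_one {g : Fˣ} (hg : ∀ u, u ∈ Subgroup.zpowers g) :
    orderOf g = Fintype.card F - 1 := by
  rw [orderOf_eq_card_of_forall_mem_zpowers hg, Nat.card_units, Nat.card_eq_fintype_card]

theorem NN_eq_zero_of_charP_dvd (p : ℕ) [CharP F p] (ht : t ∣ finrank F K)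
    (hp : p ∣ finrank F K / t) (ha : a ≠ 0) : NN F K g s h t a = 0 := by
  rw [NN_eq_card_fixedFieldFrobeniusPow ht, Nat.card_eq_zero]
  refine Or.inl ⟨fun ⟨y, htr, _⟩ ↦ ha ?_⟩
  rw [← htr, nsmul_eq_mul, (CharP.cast_eq_zero_iff F p _).mpr hp, zero_mul]

theorem NN_eq_zero_of_not_gcd_dvd {g : Fˣ} (hg : ∀ u, u ∈ Subgroup.zpowers g)
    (hsq : s ∣ Fintype.card F - 1) (ht : t ∣ finrank F K)
    (hdh : ¬ (finrank F K / t).gcd s ∣ h) : NN F K g s h t a = 0 := by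
  rw [NN_eq_card_units ht, Nat.card_eq_zero]
  refine Or.inl ⟨fun ⟨u, _, k, hk⟩ ↦ hdh ?_⟩
  set n := finrank F K / t
  obtain ⟨j, hj⟩ :=
    mem_powers_iff_mem_zpowers.mpr (hg (Units.map (Algebra.norm F : _ →* F) u))
  rw [← hj, ← pow_mul, pow_eq_pow_iff_modEq, orderOf_eq_card_sub_one hg] at hk
  rw [← Nat.dvd_add_left ((Nat.gcd_dvd_right n s).mul_right k),
    ← hk.dvd_iff ((Nat.gcd_dvd_right n s).trans hsq)]
  exact (Nat.gcd_dvd_left n s).mul_left j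

theorem NN_eq_of_charP_dvd_of_gcd_dvd (p : ℕ) [CharP F p] {g : Fˣ}
    (hg : ∀ u, u ∈ Subgroup.zpowers g) (hs : 0 < s) (hsq : s ∣ Fintype.card F - 1)
    (ht : t ∣ finrank F K) (hp : p ∣ finrank F K / t) (hdh : (finrank F K / t).gcd s ∣ h) :
    (NN F K g s h t 0 : ℚ) =
      ((finrank F K / t).gcd s / s : ℚ) * ((Fintype.card F : ℚ) ^ t - 1) := by
  set n := finrank F K / t
  set L := fixedFieldFrobeniusPow F K t
  let P : Fˣ → Prop := fun v ↦ ∃ k, v ^ n = g ^ (h + s * k)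
  have hNN : NN F K g s h t 0 = #{u : Lˣ | P (Units.map (Algebra.norm F : L →* F) u)} := by
    rw [NN_eq_card_units ht, Nat.card_eq_fintype_card, ← Fintype.card_subtype]
    refine Fintype.card_congr (Equiv.subtypeEquivRight fun u ↦ ?_)
    simp [P, n, (CharP.cast_eq_zero_iff F p n).mpr hp]
  have hord := orderOf_eq_card_sub_one hg
  have hcountF : #{v : Fˣ | P v} = n.gcd s * ((Fintype.card F - 1) / s) := by
    rw [card_filter_eq_card_filter_range_orderOf hg]
    simp_rw [P, ← pow_mul, exists_pow_eq_pow_add_mul_iff (orderOf_pos g) (hord ▸ hsq),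
      mul_comm _ n]
    rw [hord, Nat.card_filter_range_mul_modEq hs hsq hdh]
  have hfib := (Units.map (Algebra.norm F : L →* F)).card_filter_comp_mul_card
    (FiniteField.unitsMap_norm_surjective F L) P
  rw [← hNN, hcountF, Fintype.card_units, Fintype.card_units,
    ← Nat.card_eq_fintype_card (α := L), card_fixedFieldFrobeniusPow ht] at hfib
  have hq : 1 < Fintype.card F := Fintype.one_lt_card
  have hq1 : (Fintype.card F : ℚ) - 1 ≠ 0 := sub_ne_zero.mpr (by exact_mod_cast hq.ne')
  have hcast := congrArg (Nat.cast : ℕ → ℚ) hfib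
  push_cast [Nat.cast_sub hq.le, Nat.cast_sub (Nat.one_le_pow _ _ hq.le),
    Nat.cast_div hsq (Nat.cast_ne_zero.mpr hs.ne')] at hcast
  field_simp at hcast ⊢
  exact hcast

end Counting

theorem stmt1_general (p r m s h t d : ℕ) [Fact p.Prime]
    (ht : t ∣ m)
    (F K : Type*) [Field F] [Fintype F] [Field K] [Fintype K] [Algebra F K]
    (hF : Fintype.card F = p ^ r) (hK : Fintype.card K = Fintype.card F ^ m)
    (g : Fˣ) (hg : ∀ u : Fˣ, u ∈ Subgroup.zpowers g)
    (hs : 0 < s) (hsq : s ∣ Fintype.card F - 1)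
    (hd : d = Nat.gcd (m / t) s) (a : F) :
    (¬ d ∣ h → NN F K (g : F) s h t a = 0) ∧
    (p ∣ m / t → a ≠ 0 → NN F K (g : F) s h t a = 0) ∧
    (p ∣ m / t → d ∣ h → a = 0 →
      (NN F K (g : F) s h t a : ℚ) =
        ((d : ℚ) / (s : ℚ)) * ((Fintype.card F : ℚ) ^ t - 1)) := by
  have hm : finrank F K = m :=
    Nat.pow_right_injective Fintype.one_lt_card (card_eq_pow_finrank.symm.trans hK)
  have : CharP F p := charP_of_card_eq_prime_pow hF
  subst hm hd
  refine ⟨NN_eq_zero_of_not_gcd_dvd hg hsq ht, NN_eq_zero_of_charP_dvd p ht,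
    fun hp hdh ha ↦ ha ▸ NN_eq_of_charP_dvd_of_gcd_dvd p hg hs hsq ht hp hdh⟩

/-- (i) if `d ∤ h` then `N_t = 0`; (ii) if `p ∣ m/t` and `a ≠ 0` then `N_t = 0`;
(iii) if `p ∣ m/t`, `d ∣ h` and `a = 0` then `N_t = (d/s)·(q^t − 1)`. -/
theorem stmt1 (p r m s h t d : ℕ) [Fact p.Prime] (hr : 0 < r) (hm : 2 ≤ m)
    (ht : t ∣ m) (ht0 : 0 < t)
    (F K : Type*) [Field F] [Fintype F] [Field K] [Fintype K] [Algebra F K]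
    (hF : Fintype.card F = p ^ r) (hK : Fintype.card K = Fintype.card F ^ m)
    (g : Fˣ) (hg : ∀ u : Fˣ, u ∈ Subgroup.zpowers g)
    (hs : 0 < s) (hsq : s ∣ Fintype.card F - 1) (hh : h < s)
    (hd : d = Nat.gcd (m / t) s) (a : F) :
    (¬ d ∣ h → NN F K (g : F) s h t a = 0) ∧
    (p ∣ m / t → a ≠ 0 → NN F K (g : F) s h t a = 0) ∧
    (p ∣ m / t → d ∣ h → a = 0 →
      (NN F K (g : F) s h t a : ℚ) =
        ((d : ℚ) / (s : ℚ)) * ((Fintype.card F : ℚ) ^ t - 1)) :=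
  stmt1_general p r m s h t d ht F K hF hK g hg hs hsq hd a

end
end

section
/- Assume p ∤ (m/t) and d | h. Then N_t = (d/(s·q)) · (q^t − 1 + M_t). -/
noncomputable section

open Complex Polynomial Classical

/-- The canonical additive character `x ↦ exp(2πi·tr(x)/p)` of a finite field `E`
of characteristic `p` (the prime field being `ZMod p`). -/
def eChar (p : ℕ) (E : Type*) [Field E] [Fintype E] [Algebra (ZMod p) E] (x : E) : ℂ :=
  Complex.exp (2 * Real.pi * Complex.I * ((Algebra.trace (ZMod p) E x).val : ℂ) / (p : ℂ))

/-- `M_t = Σ_{c∈F^*} e_1(−(t/m)·c·a)·Σ_{x∈E^*} e_t(c·γ^{i_0}·x^{s/d})`, where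
`mt = m/t`, `sd = s/d` and `(t/m)` is the inverse of `m/t` in the prime field. -/
def MM (p : ℕ) (F E : Type*) [Field F] [Fintype F] [Field E] [Fintype E]
    [Algebra F E] [Algebra (ZMod p) F] [Algebra (ZMod p) E]
    (γ : E) (a : F) (mt sd i0 : ℕ) : ℂ :=
  ∑ c : Fˣ, eChar p F (-(((mt : F))⁻¹ * c * a)) *
    ∑ x : Eˣ, eChar p E (algebraMap F E (c : F) * γ ^ i0 * (x : E) ^ sd)

/-!
On `E = F_{q^t}` the trace and norm of `K/F` are `(m/t)·Tr_{E/F}` and `N_{E/F}^{m/t}`. Writing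
`y = γ^j`, the norm condition becomes `(m/t)·j ≡ h (mod s)`, i.e. `j ≡ i₀ (mod s/d)`, so the
admissible `y` form the coset `γ^{i₀}·(E^*)^{s/d}`. Its elements of prescribed trace are counted by
orthogonality of the additive characters of `F`, and the coset is parametrised by
`z ↦ γ^{i₀} z^{s/d}`, which hits every point exactly `s/d` times; this turns the character sum
over the coset into `M_t`.
-/

open Finset

section AdditiveCharacter

variable (p : ℕ) [Fact p.Prime] (E : Type*) [Field E] [Fintype E] [Algebra (ZMod p) E]

def eCharAddChar : AddChar E ℂ :=
  ZMod.stdAddChar.compAddMonoidHom (Algebra.trace (ZMod p) E).toAddMonoidHom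

lemma eCharAddChar_apply (x : E) : eCharAddChar p E x = eChar p E x := by
  rw [eCharAddChar, AddChar.compAddMonoidHom_apply, ZMod.stdAddChar_apply, ZMod.toCircle_apply]
  rfl

lemma isPrimitive_eCharAddChar : (eCharAddChar p E).IsPrimitive := by
  refine AddChar.IsPrimitive.of_ne_one (AddChar.ne_one_iff.mpr ?_)
  obtain ⟨x, hx⟩ := Algebra.trace_surjective (ZMod p) E 1
  refine ⟨x, fun h => one_ne_zero (ZMod.injective_stdAddChar ?_ : (1 : ZMod p) = 0)⟩
  rwa [AddChar.map_zero_eq_one, ← hx]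

lemma eChar_trace (F : Type*) [Field F] [Fintype F] [Algebra (ZMod p) F] [Algebra F E] (x : E) :
    eChar p F (Algebra.trace F E x) = eChar p E x := by
  have : IsScalarTower (ZMod p) F E := .of_algebraMap_eq' (Subsingleton.elim _ _)
  rw [eChar, eChar, Algebra.trace_trace]

end AdditiveCharacter

section FieldSums

variable {K : Type*} [Field K] [Fintype K]

lemma Fintype.sum_eq_add_sum_units {M : Type*} [AddCommMonoid M] (f : K → M) :
    ∑ c, f c = f 0 + ∑ c : Kˣ, f c := by
  rw [Fintype.sum_eq_add_sum_subtype_ne f 0]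
  exact congrArg _ (Fintype.sum_equiv unitsEquivNeZero.symm _ _ fun _ => rfl)

lemma card_filter_eq_card_filter_units {P : K → Prop} [DecidablePred P] (hP : ¬ P 0) :
    #{y | P y} = #{u : Kˣ | P u} := by
  simp_rw [card_filter]
  rw [Fintype.sum_eq_add_sum_units, if_neg hP, zero_add]

lemma card_mul_card_filter_eq_of_isPrimitive {ι : Type*} {ψ : AddChar K ℂ} (hψ : ψ.IsPrimitive)
    (S : Finset ι) (f : ι → K) (b : K) :
    (Fintype.card K : ℂ) * #{i ∈ S | f i = b} =
      #S + ∑ c : Kˣ, ψ (-(c * b)) * ∑ i ∈ S, ψ (c * f i) := by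
  have orth (i : ι) : ∑ c, ψ (c * (f i - b)) = if f i = b then (Fintype.card K : ℂ) else 0 := by
    simpa [sub_eq_zero] using AddChar.sum_mulShift (f i - b) hψ
  calc (Fintype.card K : ℂ) * #{i ∈ S | f i = b}
      = ∑ i ∈ S, ∑ c, ψ (c * (f i - b)) := by
        simp_rw [orth, sum_ite, sum_const_zero, sum_const, nsmul_eq_mul, add_zero, mul_comm]
    _ = ∑ c, ∑ i ∈ S, ψ (-(c * b)) * ψ (c * f i) := by
        rw [sum_comm]
        simp_rw [← AddChar.map_add_eq_mul, mul_sub, neg_add_eq_sub]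
    _ = _ := by
        simp_rw [Fintype.sum_eq_add_sum_units, ← mul_sum, zero_mul, neg_zero,
          AddChar.map_zero_eq_one, sum_const, nsmul_one, one_mul]

end FieldSums

section CyclicGroup

variable {G : Type*}

lemma exists_zpow_eq_zpow_add_mul_iff [Group G] (x : G) {n : ℕ} (hn : n ∣ orderOf x) (i j : ℤ) :
    (∃ w : ℤ, x ^ j = x ^ (i + n * w)) ↔ j ≡ i [ZMOD n] := by
  constructor
  · rintro ⟨w, hw⟩
    exact ((zpow_eq_zpow_iff_modEq.mp hw).of_dvd (Int.natCast_dvd_natCast.mpr hn)).trans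
      (Int.modEq_iff_dvd.mpr ⟨-w, by ring⟩)
  · intro h
    obtain ⟨w, hw⟩ := Int.modEq_iff_dvd.mp h.symm
    exact ⟨w, by rw [← hw, add_sub_cancel]⟩

lemma exists_pow_eq_pow_add_mul_iff_s2 [Group G] [Finite G] (x : G) {n : ℕ} (hn : n ∣ orderOf x)
    (h : ℕ) (j : ℤ) : (∃ k : ℕ, x ^ j = x ^ (h + n * k)) ↔ j ≡ h [ZMOD n] := by
  rw [← exists_zpow_eq_zpow_add_mul_iff x hn]
  constructor
  · rintro ⟨k, hk⟩
    exact ⟨k, by rw [hk, ← zpow_natCast]; push_cast; rfl⟩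
  · rintro ⟨w, hw⟩
    obtain ⟨k, hk⟩ := mem_powers_iff_mem_zpowers.mpr (Subgroup.zpow_mem_zpowers (x ^ n) w)
    refine ⟨k, ?_⟩
    rw [hw, zpow_add, zpow_mul, zpow_natCast, zpow_natCast, ← hk, pow_add, pow_mul]

lemma exists_zpow_mul_pow_eq_iff [Group G] {γ : G} (hγ : ∀ u, u ∈ Subgroup.zpowers γ) {n : ℕ}
    (hn : n ∣ orderOf γ) (i : ℕ) (j : ℤ) : (∃ z : G, γ ^ i * z ^ n = γ ^ j) ↔ j ≡ i [ZMOD n] := by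
  rw [← exists_zpow_eq_zpow_add_mul_iff γ hn]
  constructor
  · rintro ⟨z, hz⟩
    obtain ⟨w, rfl⟩ := Subgroup.mem_zpowers_iff.mp (hγ z)
    exact ⟨w, by rw [← hz]; group⟩
  · rintro ⟨w, hw⟩
    exact ⟨γ ^ w, by rw [hw]; group⟩

def powCoset [Monoid G] [Fintype G] [DecidableEq G] (c : G) (n : ℕ) : Finset G :=
  univ.image fun z => c * z ^ n

lemma IsCyclic.card_filter_pow_eq_pow [CommGroup G] [Fintype G] [DecidableEq G] [IsCyclic G]
    {n : ℕ} (hn : n ∣ Fintype.card G) (z₀ : G) : #{z | z ^ n = z₀ ^ n} = n := by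
  have hfiber := MonoidHom.card_fiber_eq_of_mem_range (powMonoidHom n) ⟨z₀, rfl⟩ ⟨1, rfl⟩
  simp only [powMonoidHom_apply, one_pow] at hfiber
  rw [hfiber]
  have hker := IsCyclic.card_powMonoidHom_ker (G := G) n
  rw [Nat.card_eq_fintype_card, Fintype.card_subtype, Nat.card_eq_fintype_card,
    Nat.gcd_eq_right hn] at hker
  simpa [MonoidHom.mem_ker] using hker

lemma sum_mul_pow_eq_nsmul_sum_powCoset [CommGroup G] [Fintype G] [DecidableEq G] [IsCyclic G]
    {M : Type*} [AddCommMonoid M] (c : G) {n : ℕ} (hn : n ∣ Fintype.card G) (f : G → M) :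
    ∑ z, f (c * z ^ n) = n • ∑ y ∈ powCoset c n, f y := by
  rw [Finset.sum_comp, smul_sum, powCoset]
  refine sum_congr rfl fun y hy => ?_
  obtain ⟨z₀, -, rfl⟩ := mem_image.mp hy
  simp_rw [mul_right_inj]
  rw [IsCyclic.card_filter_pow_eq_pow hn]

end CyclicGroup

lemma Int.mul_modEq_iff_modEq_div_gcd {a s h i : ℕ} (hs : 0 < s) (hdh : a.gcd s ∣ h)
    (hi : a / a.gcd s * i ≡ h / a.gcd s [MOD s / a.gcd s]) (j : ℤ) :
    a * j ≡ h [ZMOD s] ↔ j ≡ i [ZMOD (s / a.gcd s : ℕ)] := by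
  set d := a.gcd s
  have hda : d ∣ a := Nat.gcd_dvd_left a s
  have hds : d ∣ s := Nat.gcd_dvd_right a s
  have hai : (a : ℤ) * i ≡ h [ZMOD s] := by
    have := Int.natCast_modEq_iff.mpr (hi.mul_left' d)
    rwa [← mul_assoc, Nat.mul_div_cancel' hda, Nat.mul_div_cancel' hdh,
      Nat.mul_div_cancel' hds] at this
  have hsd : ((s / d : ℕ) : ℤ) = (s : ℤ) / Int.gcd s a := by
    rw [Int.gcd_natCast_natCast, Nat.gcd_comm, Int.natCast_div]
  constructor
  · intro haj
    rw [hsd]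
    exact Int.ModEq.cancel_left_div_gcd (by exact_mod_cast hs) (haj.trans hai.symm)
  · intro hj
    refine (Int.ModEq.of_dvd ?_ (hj.mul_left' (c := (a : ℤ)))).trans hai
    refine Int.natCast_dvd_natCast.mpr ⟨a / d, ?_⟩
    rw [← Nat.mul_div_assoc a hds, ← Nat.mul_div_assoc s hda, mul_comm]

lemma exists_map_pow_eq_pow_add_mul_iff {G H : Type*} [Group G] [Group H] [Finite H]
    (φ : G →* H) {γ : G} (hγ : ∀ u, u ∈ Subgroup.zpowers γ) {n s h i : ℕ} (hs : 0 < s)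
    (hsγ : s ∣ orderOf (φ γ)) (hdh : n.gcd s ∣ h)
    (hi : n / n.gcd s * i ≡ h / n.gcd s [MOD s / n.gcd s]) (y : G) :
    (∃ k : ℕ, φ y ^ n = φ γ ^ (h + s * k)) ↔ ∃ z, γ ^ i * z ^ (s / n.gcd s) = y := by
  have hsd : s / n.gcd s ∣ orderOf γ :=
    (Nat.div_dvd_of_dvd (Nat.gcd_dvd_right n s)).trans (hsγ.trans (orderOf_map_dvd φ γ))
  obtain ⟨j, rfl⟩ := Subgroup.mem_zpowers_iff.mp (hγ y)
  rw [map_zpow, ← zpow_natCast, ← zpow_mul, exists_pow_eq_pow_add_mul_iff_s2 _ hsγ, mul_comm,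
    Int.mul_modEq_iff_modEq_div_gcd hs hdh hi, exists_zpow_mul_pow_eq_iff hγ hsd]

lemma FiniteField.pow_card_eq_self_iff_mem_range {E K : Type*} [Field E] [Fintype E] [Field K]
    [Algebra E K] (x : K) : x ^ Fintype.card E = x ↔ x ∈ Set.range (algebraMap E K) := by
  have hsplit : (X ^ Fintype.card E - X : E[X]).Splits := by
    rw [splits_iff_card_roots, FiniteField.roots_X_pow_card_sub_X,
      FiniteField.X_pow_card_sub_X_natDegree_eq _ Fintype.one_lt_card]
    rfl
  have := FiniteField.roots_X_pow_card_sub_X E ▸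
    hsplit.roots_map_of_injective (algebraMap E K).injective ▸ Multiset.mem_map (b := x)
  simpa [sub_eq_zero, iff_comm,
    FiniteField.X_pow_card_sub_X_ne_zero K (Fintype.one_lt_card (α := E))] using this

section Tower

variable {F E K : Type*} [Field F] [Field E] [Field K] [Algebra E K] [Algebra F K]

lemma NN_eq_card_filter_units [Fintype F] [Fintype E] [Fintype K] {t : ℕ}
    (hE : Fintype.card E = Fintype.card F ^ t) {g : F} (hg : g ≠ 0) (s h : ℕ) (a : F) :
    NN F K g s h t a = #{y : Eˣ | Algebra.trace F K (algebraMap E K y) = a ∧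
      ∃ k : ℕ, Algebra.norm F (algebraMap E K y) = g ^ (h + s * k)} := by
  set Q : K → Prop := fun x => Algebra.trace F K x = a ∧
    ∃ k : ℕ, Algebra.norm F x = g ^ (h + s * k)
  have hQ : ¬ Q (algebraMap E K 0) := by
    rintro ⟨-, k, hk⟩
    rw [map_zero, Algebra.norm_zero] at hk
    exact pow_ne_zero _ hg hk.symm
  calc NN F K g s h t a = #{x : K | x ∈ Set.range (algebraMap E K) ∧ Q x} := by
        simp_rw [NN, Nat.card_eq_fintype_card, Fintype.card_subtype, ← hE,
          FiniteField.pow_card_eq_self_iff_mem_range]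
        rfl
    _ = #{y : E | Q (algebraMap E K y)} := by
        rw [← card_image_of_injective _ (algebraMap E K).injective]
        congr 1
        ext x
        simp only [mem_filter, mem_univ, true_and, mem_image, Set.mem_range]
        constructor
        · rintro ⟨⟨y, rfl⟩, hy⟩
          exact ⟨y, hy, rfl⟩
        · rintro ⟨y, hy, rfl⟩
          exact ⟨⟨y, rfl⟩, hy⟩
    _ = _ := card_filter_eq_card_filter_units (P := fun y => Q (algebraMap E K y)) hQ

variable [Algebra F E] [IsScalarTower F E K] [FiniteDimensional F E] [FiniteDimensional E K]

variable (F) in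
lemma Algebra.trace_algebraMap_of_tower_s2 (y : E) :
    Algebra.trace F K (algebraMap E K y) = Module.finrank E K • Algebra.trace F E y := by
  rw [← Algebra.trace_trace (S := E), Algebra.trace_algebraMap, map_nsmul]

variable (F) in
lemma Algebra.norm_algebraMap_of_tower_s2 (y : E) :
    Algebra.norm F (algebraMap E K y) = Algebra.norm F y ^ Module.finrank E K := by
  rw [← Algebra.norm_norm (S := E), Algebra.norm_algebraMap, map_pow]

lemma trace_algebraMap_eq_iff (hn : (Module.finrank E K : F) ≠ 0) (y : E) (a : F) :
    Algebra.trace F K (algebraMap E K y) = a ↔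
      Algebra.trace F E y = (Module.finrank E K : F)⁻¹ * a := by
  rw [Algebra.trace_algebraMap_of_tower_s2, nsmul_eq_mul, eq_inv_mul_iff_mul_eq₀ hn]

variable [Fintype F] [Fintype E]

lemma exists_norm_algebraMap_eq_pow_add_mul_iff_mem_powCoset {g : Fˣ}
    (hg : ∀ u, u ∈ Subgroup.zpowers g) {γ : Eˣ} (hγ : ∀ u, u ∈ Subgroup.zpowers γ)
    (hγg : Algebra.norm F (γ : E) = g)
    {s h i : ℕ} (hs : 0 < s) (hsq : s ∣ Fintype.card F - 1)
    (hdh : (Module.finrank E K).gcd s ∣ h)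
    (hi : Module.finrank E K / (Module.finrank E K).gcd s * i ≡ h / (Module.finrank E K).gcd s
      [MOD s / (Module.finrank E K).gcd s]) (y : Eˣ) :
    (∃ k : ℕ, Algebra.norm F (algebraMap E K y) = (g : F) ^ (h + s * k)) ↔
      y ∈ powCoset (γ ^ i) (s / (Module.finrank E K).gcd s) := by
  set φ : Eˣ →* Fˣ := Units.map (Algebra.norm F : E →* F)
  have hφγ : φ γ = g := Units.ext hγg
  have hsg : s ∣ orderOf (φ γ) := by
    rwa [hφγ, orderOf_eq_card_of_forall_mem_zpowers hg, Nat.card_eq_fintype_card,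
      Fintype.card_units]
  simp_rw [powCoset, mem_image, mem_univ, true_and,
    ← exists_map_pow_eq_pow_add_mul_iff φ hγ hs hsg hdh hi, hφγ, Units.ext_iff,
    Units.val_pow_eq_pow_val, Algebra.norm_algebraMap_of_tower_s2]
  rfl

variable [Fintype K]

lemma finrank_eq_div_of_card_eq_pow {t m : ℕ} (hE : Fintype.card E = Fintype.card F ^ t)
    (hK : Fintype.card K = Fintype.card F ^ m) : Module.finrank E K = m / t := by
  have hq : 1 < Fintype.card F := Fintype.one_lt_card
  rw [← Nat.pow_right_injective hq (Module.card_eq_pow_finrank.symm.trans hE),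
    ← Nat.pow_right_injective hq (Module.card_eq_pow_finrank.symm.trans hK),
    ← Module.finrank_mul_finrank F E K, Nat.mul_div_cancel_left _ Module.finrank_pos]

end Tower

lemma card_filter_powCoset_trace_eq (p : ℕ) [Fact p.Prime] {F E : Type*} [Field F] [Fintype F]
    [Field E] [Fintype E] [Algebra F E] [Algebra (ZMod p) F] [Algebra (ZMod p) E] (c : Eˣ)
    {n : ℕ} (hn : n ∣ Fintype.card Eˣ) (b : F) :
    (#((powCoset c n).filter fun y : Eˣ => Algebra.trace F E y = b) : ℂ) =
      (n * Fintype.card F : ℂ)⁻¹ * ((Fintype.card E - 1 : ℂ) + ∑ u : Fˣ, eChar p F (-(u * b)) *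
        ∑ x : Eˣ, eChar p E (algebraMap F E u * c * (x : E) ^ n)) := by
  have hcard : (n : ℂ) * #(powCoset c n) = Fintype.card E - 1 := by
    have := sum_mul_pow_eq_nsmul_sum_powCoset c hn (fun _ => (1 : ℂ))
    simp only [sum_const, card_univ, Fintype.card_units, nsmul_eq_mul, mul_one] at this
    rw [← this, Nat.cast_sub Fintype.card_pos, Nat.cast_one]
  have hsum (u : Fˣ) : (n : ℂ) * ∑ y ∈ powCoset c n, eCharAddChar p F (u * Algebra.trace F E y) =
      ∑ x : Eˣ, eChar p E (algebraMap F E u * c * (x : E) ^ n) := by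
    have hψ (y : E) : eCharAddChar p F (u * Algebra.trace F E y) =
        eChar p E (algebraMap F E u * y) := by
      rw [← smul_eq_mul, ← LinearMap.map_smul, Algebra.smul_def, eCharAddChar_apply, eChar_trace]
    simp_rw [hψ, ← nsmul_eq_mul, ← sum_mul_pow_eq_nsmul_sum_powCoset c hn, Units.val_mul,
      Units.val_pow_eq_pow_val, mul_assoc]
  have hn0 : (n * Fintype.card F : ℂ) ≠ 0 := by
    have := Nat.pos_of_dvd_of_pos hn Fintype.card_pos
    exact mul_ne_zero (by exact_mod_cast this.ne') (by exact_mod_cast Fintype.card_ne_zero)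
  rw [eq_inv_mul_iff_mul_eq₀ hn0, mul_assoc,
    card_mul_card_filter_eq_of_isPrimitive (isPrimitive_eCharAddChar p F), mul_add, hcard, mul_sum]
  simp_rw [mul_left_comm (n : ℂ), hsum, eCharAddChar_apply]

theorem stmt2_general (p m s h t d i0 : ℕ) [Fact p.Prime]
    (F E K : Type*) [Field F] [Fintype F] [Field E] [Fintype E] [Field K] [Fintype K]
    [Algebra F E] [Algebra E K] [Algebra F K] [IsScalarTower F E K]
    [Algebra (ZMod p) F] [Algebra (ZMod p) E]
    (hE : Fintype.card E = Fintype.card F ^ t)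
    (hK : Fintype.card K = Fintype.card F ^ m)
    (g : Fˣ) (hg : ∀ u : Fˣ, u ∈ Subgroup.zpowers g)
    (γ : Eˣ) (hγ : ∀ u : Eˣ, u ∈ Subgroup.zpowers γ)
    (hγg : Algebra.norm F ((γ : Eˣ) : E) = (g : F))
    (hs : 0 < s) (hsq : s ∣ Fintype.card F - 1)
    (hd : d = Nat.gcd (m / t) s)
    (hpmt : ¬ p ∣ m / t) (hdh : d ∣ h)
    (hi0 : i0 < s / d ∧ (m / (d * t)) * i0 ≡ h / d [MOD s / d]) (a : F) :
    (NN F K (g : F) s h t a : ℂ) =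
      ((d : ℂ) / ((s : ℂ) * (Fintype.card F : ℂ))) *
        ((Fintype.card F : ℂ) ^ t - 1 + MM p F E ((γ : Eˣ) : E) a (m / t) (s / d) i0) := by
  have : CharP F p := charP_of_injective_algebraMap (algebraMap (ZMod p) F).injective p
  have hmt : ((m / t : ℕ) : F) ≠ 0 := by rwa [Ne, CharP.cast_eq_zero_iff F p]
  have hi : m / t / d * i0 ≡ h / d [MOD s / d] := by
    rw [Nat.div_div_eq_div_mul, mul_comm t d]; exact hi0.2
  have hn := finrank_eq_div_of_card_eq_pow (E := E) (K := K) hE hK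
  set n := Module.finrank E K
  rw [← hn] at hmt hi hd ⊢
  subst hd
  have hsd : s / n.gcd s ∣ Fintype.card Eˣ := by
    rw [Fintype.card_units, hE]
    exact (Nat.div_dvd_of_dvd (Nat.gcd_dvd_right _ _)).trans
      (hsq.trans (Nat.sub_one_dvd_pow_sub_one _ t))
  have hcount : NN F K g s h t a = #((powCoset (γ ^ i0) (s / n.gcd s)).filter
      fun y : Eˣ => Algebra.trace F E y = (n : F)⁻¹ * a) := by
    rw [NN_eq_card_filter_units hE g.ne_zero]
    congr 1
    ext y
    simp only [mem_filter, mem_univ, true_and, trace_algebraMap_eq_iff hmt,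
      exists_norm_algebraMap_eq_pow_add_mul_iff_mem_powCoset hg hγ hγg hs hsq hdh hi]
    exact and_comm
  rw [hcount, card_filter_powCoset_trace_eq p (γ ^ i0) hsd, hE, MM]
  congr 1
  · have hds : (n.gcd s : ℂ) * (s / n.gcd s : ℕ) = s := by
      exact_mod_cast Nat.mul_div_cancel' (Nat.gcd_dvd_right n s)
    have hd0 : (n.gcd s : ℂ) ≠ 0 := by exact_mod_cast (Nat.gcd_pos_of_pos_right n hs).ne'
    rw [← hds, mul_assoc, div_mul_cancel_left₀ hd0]
  · simp only [Nat.cast_pow, Units.val_pow_eq_pow_val, mul_left_comm _ (n : F)⁻¹, mul_assoc]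

/-- If `p ∤ m/t` and `d ∣ h` then `N_t = (d/(s·q))·(q^t − 1 + M_t)`. -/
theorem stmt2 (p r m s h t d i0 : ℕ) [Fact p.Prime] (hr : 0 < r) (hm : 2 ≤ m)
    (ht : t ∣ m) (ht0 : 0 < t)
    (F E K : Type*) [Field F] [Fintype F] [Field E] [Fintype E] [Field K] [Fintype K]
    [Algebra F E] [Algebra E K] [Algebra F K] [IsScalarTower F E K]
    [Algebra (ZMod p) F] [Algebra (ZMod p) E]
    (hF : Fintype.card F = p ^ r) (hE : Fintype.card E = Fintype.card F ^ t)
    (hK : Fintype.card K = Fintype.card F ^ m)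
    (g : Fˣ) (hg : ∀ u : Fˣ, u ∈ Subgroup.zpowers g)
    (γ : Eˣ) (hγ : ∀ u : Eˣ, u ∈ Subgroup.zpowers γ)
    (hγg : Algebra.norm F ((γ : Eˣ) : E) = (g : F))
    (hs : 0 < s) (hsq : s ∣ Fintype.card F - 1) (hh : h < s)
    (hd : d = Nat.gcd (m / t) s)
    (hpmt : ¬ p ∣ m / t) (hdh : d ∣ h)
    (hi0 : i0 < s / d ∧ (m / (d * t)) * i0 ≡ h / d [MOD s / d]) (a : F) :
    (NN F K (g : F) s h t a : ℂ) =
      ((d : ℂ) / ((s : ℂ) * (Fintype.card F : ℂ))) *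
        ((Fintype.card F : ℂ) ^ t - 1 + MM p F E ((γ : Eˣ) : E) a (m / t) (s / d) i0) :=
  stmt2_general p m s h t d i0 F E K hE hK g hg γ hγ hγg hs hsq hd hpmt hdh hi0 a
end
end

section
/- Assume p ∤ (m/t), d | h, and a ≠ 0. Set a_0 = −(m/t)·a^{−1} ∈ F_q^* (with m/t taken mod p), t_0 = (q^t−1)/(q−1), and u = s/(d·l). Then l = gcd(t, s/d) = gcd(t_0, s/d) and M_t = (1/u) · Σ_{j=0}^{u−1} ( Σ_{x ∈ F_{q^t}^*} e_t(a_0·γ_t^{t_0·j + i_0}·x^{s/d}) ) · ( Σ_{c ∈ F_q^*} e_1(g^j·c^u) ). -/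
noncomputable section

open Complex Polynomial Classical

/-! Substituting `c ↦ a₀ c` turns `M_t` into `∑_{c ∈ F^*} e_1(c) Φ(c)` with
`Φ(c) = ∑_x e_t(a₀ c γ^{i_0} x^{s/d})`. In `E` we have `g = N(γ) = γ^{t_0}`, and `q ≡ 1 (mod s/d)`
gives `t_0 ≡ t`, hence `s/d ∣ t_0 u`; so `c^u` is an `(s/d)`-th power in `E^*`, absorbed by `x^{s/d}`,
and `Φ` is constant on the cosets `g^j (F^*)^u`. The formula follows because
`(j, c) ↦ g^j c^u`, `j < u`, covers the cyclic group `F^*` exactly `u` times. -/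

open Finset

theorem Nat.dvd_mul_div_gcd (t n : ℕ) : n ∣ t * (n / Nat.gcd t n) :=
  Nat.mul_div_assoc t (Nat.gcd_dvd_right t n) ▸ Nat.dvd_lcm_right t n

theorem Nat.geomSum_modEq_of_modEq_one {q n : ℕ} (hq : q ≡ 1 [MOD n]) (t : ℕ) :
    ∑ i ∈ range t, q ^ i ≡ t [MOD n] := by
  rw [← ZMod.natCast_eq_natCast_iff] at hq ⊢
  push_cast
  simp [hq]

theorem Finset.sum_range_mul_eq_sum_sum {M : Type*} [AddCommMonoid M] (f : ℕ → M) (a b : ℕ) :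
    ∑ k ∈ range (a * b), f k = ∑ i ∈ range a, ∑ j ∈ range b, f (i + a * j) := by
  rw [mul_comm, ← Fin.sum_univ_eq_sum_range, ← finProdFinEquiv.sum_comp, Fintype.sum_prod_type,
    Finset.sum_comm, ← Fin.sum_univ_eq_sum_range]
  refine Fintype.sum_congr _ _ fun i => ?_
  rw [← Fin.sum_univ_eq_sum_range (fun j => f (i + a * j))]
  rfl

theorem Function.Periodic.sum_range_mul_eq_nsmul {M : Type*} [AddCommMonoid M] {f : ℕ → M}
    {N : ℕ} (hf : Function.Periodic f N) (u : ℕ) :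
    ∑ k ∈ range (u * N), f k = u • ∑ k ∈ range N, f k := by
  induction u with
  | zero => simp
  | succ u ih =>
    rw [add_mul, one_mul, sum_range_add, ih, succ_nsmul]
    congr 1
    exact sum_congr rfl fun k _ => by rw [add_comm]; exact (hf.nat_mul u) k

section Cyclic

variable {G M : Type*} [Group G] [Fintype G] [AddCommMonoid M] {g : G}

theorem sum_eq_sum_range_pow_of_forall_mem_zpowers (hg : ∀ x, x ∈ Subgroup.zpowers g)
    (f : G → M) : ∑ x, f x = ∑ k ∈ range (Nat.card G), f (g ^ k) := by
  rw [← IsCyclic.image_range_card hg, sum_image]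
  rw [← orderOf_eq_card_of_forall_mem_zpowers hg]
  exact fun i hi j hj => pow_injOn_Iio_orderOf (by simpa using hi) (by simpa using hj)

theorem sum_range_sum_mul_pow_eq_nsmul (hg : ∀ x, x ∈ Subgroup.zpowers g) (u : ℕ) (f : G → M) :
    ∑ j ∈ range u, ∑ c, f (g ^ j * c ^ u) = u • ∑ y, f y := by
  have hper : Function.Periodic (fun k => f (g ^ k)) (Nat.card G) := fun k => by
    simp only [pow_add, pow_card_eq_one', mul_one]
  simp_rw [sum_eq_sum_range_pow_of_forall_mem_zpowers hg, ← hper.sum_range_mul_eq_nsmul,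
    sum_range_mul_eq_sum_sum, ← pow_mul', ← pow_add]

theorem sum_range_mul_sum_mul_pow_eq_nsmul {R : Type*} [NonUnitalNonAssocSemiring R]
    (hg : ∀ x, x ∈ Subgroup.zpowers g) (u : ℕ) (f Φ : G → R) (hΦ : ∀ y c, Φ (y * c ^ u) = Φ y) :
    ∑ j ∈ range u, Φ (g ^ j) * ∑ c, f (g ^ j * c ^ u) = u • ∑ y, Φ y * f y := by
  rw [← sum_range_sum_mul_pow_eq_nsmul hg u]
  simp_rw [mul_sum, hΦ]

end Cyclic

theorem sum_units_mul_pow_mul_pow {E M : Type*} [CommMonoid E] [Fintype Eˣ] [AddCommMonoid M]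
    (ψ : E → M) (b : E) (y : Eˣ) (n : ℕ) :
    ∑ x : Eˣ, ψ (b * (y : E) ^ n * (x : E) ^ n) = ∑ x : Eˣ, ψ (b * (x : E) ^ n) :=
  Fintype.sum_equiv (Equiv.mulLeft y) _ _ fun x => by simp [mul_pow, mul_assoc]

section MM

variable {p : ℕ} {F E : Type*} [Field F] [Fintype F] [Field E] [Fintype E]
  [Algebra F E] [Algebra (ZMod p) F] [Algebra (ZMod p) E]

theorem MM_eq_sum_units (γ : E) {a : F} (ha : a ≠ 0) {mt : ℕ} (hmt : (mt : F) ≠ 0) (n i0 : ℕ) :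
    MM p F E γ a mt n i0 = ∑ c : Fˣ, eChar p F c *
      ∑ x : Eˣ, eChar p E (algebraMap F E (-mt * a⁻¹ * c) * γ ^ i0 * (x : E) ^ n) := by
  have ha0 : -(mt : F) * a⁻¹ ≠ 0 := by simp [hmt, ha]
  refine (Fintype.sum_equiv (Equiv.mulLeft (Units.mk0 _ ha0)) _ _ fun c => ?_).symm
  simp only [Equiv.coe_mulLeft, Units.val_mul, Units.val_mk0]
  congr 3
  field_simp

theorem MM_eq_of_algebraMap_eq_pow {g : Fˣ} (hg : ∀ x, x ∈ Subgroup.zpowers g) {γ : Eˣ} {t0 : ℕ}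
    (hgγ : algebraMap F E g = (γ : E) ^ t0) {n u : ℕ} (hn : n ∣ t0 * u) (hu : u ≠ 0)
    {a : F} (ha : a ≠ 0) {mt : ℕ} (hmt : (mt : F) ≠ 0) (i0 : ℕ) :
    MM p F E γ a mt n i0 = (1 / (u : ℂ)) * ∑ j ∈ Finset.range u,
      (∑ x : Eˣ, eChar p E (algebraMap F E (-mt * a⁻¹) * (γ : E) ^ (t0 * j + i0) * (x : E) ^ n)) *
      ∑ c : Fˣ, eChar p F ((g : F) ^ j * (c : F) ^ u) := by
  set Φ : Fˣ → ℂ := fun c =>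
    ∑ x : Eˣ, eChar p E (algebraMap F E (-mt * a⁻¹ * c) * γ ^ i0 * (x : E) ^ n)
  have hgpow (k : ℕ) : algebraMap F E ((g ^ k : Fˣ) : F) = (γ : E) ^ (t0 * k) := by
    rw [Units.val_pow_eq_pow_val, map_pow, hgγ, pow_mul]
  have hΦ (y c : Fˣ) : Φ (y * c ^ u) = Φ y := by
    obtain ⟨k, rfl⟩ := mem_powers_iff_mem_zpowers.mpr (hg c)
    obtain ⟨w, hw⟩ := hn
    have hexp : t0 * (k * u) = w * k * n := by rw [mul_left_comm, hw]; ring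
    have hpow : algebraMap F E (((g ^ k) ^ u : Fˣ) : F) = ((γ ^ (w * k) : Eˣ) : E) ^ n := by
      rw [← pow_mul, hgpow, hexp, Units.val_pow_eq_pow_val, pow_mul]
    have harg (x : Eˣ) : algebraMap F E (-mt * a⁻¹ * ↑(y * (g ^ k) ^ u)) * γ ^ i0 * (x : E) ^ n =
        algebraMap F E (-mt * a⁻¹ * y) * γ ^ i0 * ((γ ^ (w * k) : Eˣ) : E) ^ n * (x : E) ^ n := by
      rw [Units.val_mul, ← mul_assoc, map_mul, hpow]
      ring
    simp only [Φ, harg]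
    exact sum_units_mul_pow_mul_pow _ _ _ _
  have hΦg (j : ℕ) : Φ (g ^ j) =
      ∑ x : Eˣ, eChar p E (algebraMap F E (-mt * a⁻¹) * (γ : E) ^ (t0 * j + i0) * (x : E) ^ n) := by
    simp only [Φ, map_mul, hgpow, pow_add, mul_assoc]
  have hpow (j : ℕ) (c : Fˣ) : (g : F) ^ j * (c : F) ^ u = ((g ^ j * c ^ u : Fˣ) : F) := by
    push_cast; rfl
  simp_rw [← hΦg, hpow]
  rw [sum_range_mul_sum_mul_pow_eq_nsmul hg u (fun c => eChar p F c) Φ hΦ, nsmul_eq_mul, one_div,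
    inv_mul_cancel_left₀ (Nat.cast_ne_zero.mpr hu), MM_eq_sum_units (γ : E) ha hmt]
  exact sum_congr rfl fun c _ => mul_comm _ _

end MM

theorem stmt7_general (p m s t d l u t0 i0 : ℕ) [Fact p.Prime]
    (F E : Type*) [Field F] [Fintype F] [Field E] [Fintype E]
    [Algebra F E] [Algebra (ZMod p) F] [Algebra (ZMod p) E]
    (hE : Fintype.card E = Fintype.card F ^ t)
    (g : Fˣ) (hg : ∀ u' : Fˣ, u' ∈ Subgroup.zpowers g)
    (γ : Eˣ) (hγg : Algebra.norm F ((γ : Eˣ) : E) = (g : F))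
    (hs : 0 < s) (hsq : s ∣ Fintype.card F - 1)
    (hd : d = Nat.gcd (m / t) s) (hl : l = Nat.gcd t (s / d))
    (hu : u = s / (d * l)) (hT0 : t0 = (Fintype.card F ^ t - 1) / (Fintype.card F - 1))
    (hpmt : ¬ p ∣ m / t)
    (a : F) (ha : a ≠ 0) (a0 : F) (ha0 : a0 = -(((m / t : ℕ) : F)) * a⁻¹) :
    l = Nat.gcd t0 (s / d) ∧
    MM p F E ((γ : Eˣ) : E) a (m / t) (s / d) i0 =
      (1 / (u : ℂ)) * ∑ j ∈ Finset.range u,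
        (∑ x : Eˣ, eChar p E (algebraMap F E a0 * ((γ : Eˣ) : E) ^ (t0 * j + i0) * (x : E) ^ (s / d))) *
        (∑ c : Fˣ, eChar p F ((g : F) ^ j * (c : F) ^ u)) := by
  have hds : d ∣ s := hd ▸ Nat.gcd_dvd_right _ _
  have hq : Fintype.card F ≡ 1 [MOD s / d] :=
    ((Nat.modEq_iff_dvd' Fintype.card_pos).mpr ((Nat.div_dvd_of_dvd hds).trans hsq)).symm
  have ht0 : t0 ≡ t [MOD s / d] := by
    rw [hT0, ← Nat.geomSum_eq Fintype.one_lt_card]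
    exact Nat.geomSum_modEq_of_modEq_one hq t
  have hl' : l = Nat.gcd t0 (s / d) := by rw [hl, ht0.gcd_eq]
  refine ⟨hl', ?_⟩
  have hu' : u = s / d / Nat.gcd t (s / d) := by rw [hu, hl, Nat.div_div_eq_div_mul]
  have hsd : 0 < s / d := Nat.div_pos (Nat.le_of_dvd hs hds) (hd ▸ Nat.gcd_pos_of_pos_right _ hs)
  have hu0 : u ≠ 0 := hu' ▸ (Nat.div_pos (Nat.le_of_dvd hsd (Nat.gcd_dvd_right _ _))
    (Nat.gcd_pos_of_pos_right _ hsd)).ne'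
  have hdvd : s / d ∣ t0 * u := Nat.modEq_zero_iff_dvd.mp <| (ht0.mul_right u).trans <|
    Nat.modEq_zero_iff_dvd.mpr <| hu' ▸ Nat.dvd_mul_div_gcd t (s / d)
  have hgγ : algebraMap F E g = (γ : E) ^ t0 := by
    rw [← hγg, FiniteField.algebraMap_norm_eq_pow, Nat.card_eq_fintype_card,
      Nat.card_eq_fintype_card, hE, hT0]
  have hmt : ((m / t : ℕ) : F) ≠ 0 := by
    have := charP_of_injective_algebraMap (algebraMap (ZMod p) F).injective p
    rwa [Ne, CharP.cast_eq_zero_iff F p]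
  rw [ha0]
  exact MM_eq_of_algebraMap_eq_pow hg hgγ hdvd hu0 ha hmt i0

/-- If `p ∤ m/t`, `d ∣ h` and `a ≠ 0` then, with `a_0 = −(m/t)·a⁻¹`,
`t_0 = (q^t−1)/(q−1)` and `u = s/(d·l)`:  `l = gcd(t, s/d) = gcd(t_0, s/d)` and
`M_t = (1/u)·Σ_{j=0}^{u−1} (Σ_{x∈E^*} e_t(a_0·γ^{t_0·j+i_0}·x^{s/d}))·(Σ_{c∈F^*} e_1(g^j·c^u))`. -/
theorem stmt7 (p r m s h t d l u t0 i0 : ℕ) [Fact p.Prime] (hr : 0 < r) (hm : 2 ≤ m)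
    (ht : t ∣ m) (ht0 : 0 < t)
    (F E : Type*) [Field F] [Fintype F] [Field E] [Fintype E]
    [Algebra F E] [Algebra (ZMod p) F] [Algebra (ZMod p) E]
    (hF : Fintype.card F = p ^ r) (hE : Fintype.card E = Fintype.card F ^ t)
    (g : Fˣ) (hg : ∀ u' : Fˣ, u' ∈ Subgroup.zpowers g)
    (γ : Eˣ) (hγ : ∀ u' : Eˣ, u' ∈ Subgroup.zpowers γ)
    (hγg : Algebra.norm F ((γ : Eˣ) : E) = (g : F))
    (hs : 0 < s) (hsq : s ∣ Fintype.card F - 1) (hh : h < s)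
    (hd : d = Nat.gcd (m / t) s) (hl : l = Nat.gcd t (s / d))
    (hu : u = s / (d * l)) (hT0 : t0 = (Fintype.card F ^ t - 1) / (Fintype.card F - 1))
    (hpmt : ¬ p ∣ m / t) (hdh : d ∣ h)
    (hi0 : i0 < s / d ∧ (m / (d * t)) * i0 ≡ h / d [MOD s / d])
    (a : F) (ha : a ≠ 0) (a0 : F) (ha0 : a0 = -(((m / t : ℕ) : F)) * a⁻¹) :
    l = Nat.gcd t0 (s / d) ∧
    MM p F E ((γ : Eˣ) : E) a (m / t) (s / d) i0 =
      (1 / (u : ℂ)) * ∑ j ∈ Finset.range u,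
        (∑ x : Eˣ, eChar p E (algebraMap F E a0 * ((γ : Eˣ) : E) ^ (t0 * j + i0) * (x : E) ^ (s / d))) *
        (∑ c : Fˣ, eChar p F ((g : F) ^ j * (c : F) ^ u)) :=
  stmt7_general p m s t d l u t0 i0 F E hE g hg γ hγg hs hsq hd hl hu hT0 hpmt a ha a0 ha0

end
end
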